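/- For every positive integer k and every prime power p with p ≤ k, f(k, pk) ≥ p². -/

import Mathlib

open Finset

/-- The elements of `S` on the `A` side (left side). -/
def sideA {N : ℕ} (S : Finset (Fin N ⊕ Fin N)) : Finset (Fin N ⊕ Fin N) :=
  S.filter (fun x => x.isLeft)

/-- The elements of `S` on the `B` side (right side). -/
def sideB {N : ℕ} (S : Finset (Fin N ⊕ Fin N)) : Finset (Fin N ⊕ Fin N) :=
  S.filter (fun x => x.isRight)

/-- A family of subsets of `A ∪ B` is semiintersecting if every member meets each side in
exactly `k` elements, and any two distinct members are disjoint in exactly one of the sides. -/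
def Semiintersecting (k N : ℕ) (F : Finset (Finset (Fin N ⊕ Fin N))) : Prop :=
  (∀ S ∈ F, (sideA S).card = k ∧ (sideB S).card = k) ∧
  (∀ S ∈ F, ∀ T ∈ F, S ≠ T →
      ((sideA S ∩ sideA T = ∅) ↔ (sideB S ∩ sideB T ≠ ∅)))

/-- `f k N`: the maximum cardinality of a semiintersecting family with parameters `k`, `N`. -/
noncomputable def semiMax (k N : ℕ) : ℕ :=
  sSup {n | ∃ F : Finset (Finset (Fin N ⊕ Fin N)), Semiintersecting k N F ∧ F.card = n}

/-!
Let `K` be a field with `p` elements and identify both `A` and `B` with `[k] × K`, so that the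
graph of any function `[k] → K` is a `k`-set on either side. Fix a surjection `c : [k] → K`
(possible as `p ≤ k`) and, for `a, b ∈ K`, let `S_{a,b}` consist of the graph of the constant `a`
on the `A`-side and the graph of `j ↦ a c(j) + b` on the `B`-side. Members with distinct slopes
have disjoint `A`-sides, and their affine lines meet; members with the same slope share their
`A`-side, and their lines are parallel, hence disjoint. This gives `p²` members.
-/

open Function

lemma sideA_eq_map_toLeft {N : ℕ} (S : Finset (Fin N ⊕ Fin N)) :
    sideA S = S.toLeft.map .inl := by
  ext (x | x) <;> simp [sideA]

lemma sideB_eq_map_toRight {N : ℕ} (S : Finset (Fin N ⊕ Fin N)) :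
    sideB S = S.toRight.map .inr := by
  ext (x | x) <;> simp [sideB]

lemma card_le_semiMax {k N : ℕ} {F : Finset (Finset (Fin N ⊕ Fin N))}
    (hF : Semiintersecting k N F) : #F ≤ semiMax k N :=
  le_csSup ⟨Fintype.card (Finset (Fin N ⊕ Fin N)), by rintro _ ⟨G, -, rfl⟩; exact card_le_univ G⟩
    ⟨F, hF, rfl⟩

section Pairs

variable {ι : Type*} [Fintype ι] {k N : ℕ} (X Y : ι → Finset (Fin N))

lemma semiintersecting_image_disjSum (hX : ∀ i, #(X i) = k) (hY : ∀ i, #(Y i) = k)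
    (hXY : ∀ i j, i ≠ j → (Disjoint (X i) (X j) ↔ ¬Disjoint (Y i) (Y j))) :
    Semiintersecting k N (univ.image fun i => (X i).disjSum (Y i)) := by
  simp only [Semiintersecting, mem_image, mem_univ, true_and, forall_exists_index,
    forall_apply_eq_imp_iff, sideA_eq_map_toLeft, sideB_eq_map_toRight, toLeft_disjSum,
    toRight_disjSum, card_map, ← map_inter, ne_eq, map_eq_empty, ← disjoint_iff_inter_eq_empty]
  exact ⟨fun i => ⟨hX i, hY i⟩, fun i j hij => hXY i j fun h => hij (h ▸ rfl)⟩

lemma card_le_semiMax_of_pairs (hk : 0 < k) (hX : ∀ i, #(X i) = k) (hY : ∀ i, #(Y i) = k)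
    (hXY : ∀ i j, i ≠ j → (Disjoint (X i) (X j) ↔ ¬Disjoint (Y i) (Y j))) :
    Fintype.card ι ≤ semiMax k N := by
  have hinj : Injective fun i => (X i).disjSum (Y i) := by
    intro i j hij
    obtain ⟨hXij, hYij⟩ := disjSum_inj.1 hij
    by_contra hne
    have := hXY i j hne
    rw [hXij, hYij, disjoint_self_iff_empty, disjoint_self_iff_empty,
      ← card_eq_zero, ← card_eq_zero, hX, hY] at this
    omega
  simpa [card_image_of_injective _ hinj] using
    card_le_semiMax (semiintersecting_image_disjSum X Y hX hY hXY)

end Pairs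

section Graphs

variable {β K : Type*} [Fintype β]

def graphFinset (f : β → K) : Finset (β × K) :=
  univ.map ⟨fun j => (j, f j), fun _ _ h => (Prod.ext_iff.1 h).1⟩

lemma mem_graphFinset {f : β → K} {x : β × K} : x ∈ graphFinset f ↔ f x.1 = x.2 := by
  simp only [graphFinset, mem_map, mem_univ, true_and]
  exact ⟨by rintro ⟨j, rfl⟩; rfl, fun h => ⟨x.1, Prod.ext rfl h⟩⟩

lemma card_graphFinset (f : β → K) : #(graphFinset f) = Fintype.card β := by
  simp [graphFinset]

lemma disjoint_graphFinset_iff {f g : β → K} :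
    Disjoint (graphFinset f) (graphFinset g) ↔ ∀ j, f j ≠ g j := by
  simp [disjoint_left, mem_graphFinset, eq_comm]

theorem card_le_semiMax_of_graphs {ι : Type*} [Fintype ι] [Nonempty β] {N : ℕ}
    (e : β × K ≃ Fin N) (f g : ι → β → K)
    (h : ∀ i i', i ≠ i' → ((∀ j, f i j ≠ f i' j) ↔ ∃ j, g i j = g i' j)) :
    Fintype.card ι ≤ semiMax (Fintype.card β) N := by
  refine card_le_semiMax_of_pairs (fun i => (graphFinset (f i)).map e.toEmbedding)
    (fun i => (graphFinset (g i)).map e.toEmbedding) Fintype.card_pos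
    (fun i => by rw [card_map, card_graphFinset]) (fun i => by rw [card_map, card_graphFinset])
    fun i i' hii' => ?_
  simp only [disjoint_map, disjoint_graphFinset_iff, h i i' hii', not_forall, not_not]

end Graphs

lemma ne_iff_exists_affine_eq {β K : Type*} [Field K] {c : β → K} (hc : Surjective c)
    {a b a' b' : K} (h : (a, b) ≠ (a', b')) : a ≠ a' ↔ ∃ j, a * c j + b = a' * c j + b' := by
  constructor
  · intro ha
    obtain ⟨j, hj⟩ := hc ((b' - b) / (a - a'))
    refine ⟨j, ?_⟩
    rw [hj]
    field_simp [sub_ne_zero.2 ha]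
    ring
  · rintro ⟨j, hj⟩ rfl
    exact h (by simpa using hj)

theorem semiMax_pk_general (k p : ℕ) (hp : IsPrimePow p) (hpk : p ≤ k) :
    p ^ 2 ≤ semiMax k (p * k) := by
  obtain ⟨q, n, hq, hn, rfl⟩ := hp
  have : Fact q.Prime := ⟨hq.nat_prime⟩
  let K := GaloisField q n
  let : Fintype K := Fintype.ofFinite K
  have hK : Fintype.card K = q ^ n := by
    rw [← Nat.card_eq_fintype_card]
    exact GaloisField.card q n hn.ne'
  obtain ⟨ι⟩ : Nonempty (K ↪ Fin k) := Embedding.nonempty_of_card_le (by simpa [hK] using hpk)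
  have hc : Surjective (invFun ι) := invFun_surjective ι.injective
  have : Nonempty (Fin k) := ⟨ι 0⟩
  let e : Fin k × K ≃ Fin (q ^ n * k) := Fintype.equivFinOfCardEq (by simp [hK, mul_comm])
  simpa [hK, sq] using card_le_semiMax_of_graphs e (fun (ab : K × K) _ => ab.1)
    (fun (ab : K × K) j => ab.1 * invFun ι j + ab.2) fun ⟨_, _⟩ ⟨_, _⟩ h => by
      simpa using ne_iff_exists_affine_eq hc h

theorem semiMax_pk (k p : ℕ) (hk : 0 < k) (hp : IsPrimePow p) (hpk : p ≤ k) :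
    p ^ 2 ≤ semiMax k (p * k) :=
  semiMax_pk_general k p hp hpk
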